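/- In a graph consisting of the union of three internally disjoint paths Q₁, Q₂, Q₃ from a common vertex set X-part to a vertex z, together with a tree S connecting their three endvertices in X, where each Qᵢ contains a vertex of A, the union S ∪ Q₁ ∪ Q₂ ∪ Q₃ contains a theta graph each of whose three subdivided edges contains a vertex of A, and hence contains an even A-cycle. -/

import Mathlib

/-!
Inside the tree `S` the three leaves `x₁, x₂, x₃` are joined to a branch vertex `m` by paths
meeting only in `m`. Prolonging them by `Q₁, Q₂, Q₃` gives three paths from `m` to `z` that
pairwise meet only in their ends, i.e. a theta graph, and each of them has a vertex of `A` in its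
interior. Two of the three path lengths have the same parity, and those two paths close up to an
even cycle through a vertex of `A`.
-/

namespace SimpleGraph

variable {V W : Type*} {G : SimpleGraph V}

namespace Walk

variable {u v w m x : V}

lemma IsPath.start_notMem_support_tail {p : G.Walk u v} (hp : p.IsPath) : u ∉ p.support.tail :=
  (List.nodup_cons.mp (p.cons_tail_support ▸ hp.support_nodup)).1

lemma one_lt_length_of_mem_support {p : G.Walk u v} (hx : x ∈ p.support) (hxu : x ≠ u)
    (hxv : x ≠ v) : 1 < p.length := by
  rcases p with _ | ⟨_, _ | ⟨_, _⟩⟩ <;> simp_all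

lemma IsPath.eq_of_mem_support_of_append {p : G.Walk u v} {q : G.Walk v w}
    (hpq : (p.append q).IsPath) (hp : x ∈ p.support) (hq : x ∈ q.support) : x = v :=
  by_contra fun h => hpq.ne_of_mem_support_of_append h hp hq rfl

lemma IsPath.isCycle_append_reverse {p q : G.Walk u v} (hp : p.IsPath) (hq : q.IsPath)
    (h : ∀ x ∈ p.support, x ∈ q.support → x = u ∨ x = v) (hp₁ : 1 < p.length) :
    (p.append q.reverse).IsCycle := by
  refine hp.isCycle_append hq.reverse (fun x hxp hxq => ?_) (Or.inl hp₁)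
  have hxq' : x ∈ q.support := by simpa using List.mem_of_mem_tail hxq
  rcases h x (List.mem_of_mem_tail hxp) hxq' with rfl | rfl
  · exact hp.start_notMem_support_tail hxp
  · exact hq.reverse.start_notMem_support_tail hxq

lemma IsPath.append_of_forall_mem_support {p : G.Walk u v} {q : G.Walk v w} (hp : p.IsPath)
    (hq : q.IsPath) (h : ∀ x ∈ p.support, x ∈ q.support → x = v) : (p.append q).IsPath := by
  rw [isPath_def, support_append]
  refine hp.support_nodup.append hq.support_nodup.tail fun x hxp hxq => ?_
  obtain rfl := h x hxp (List.mem_of_mem_tail hxq)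
  exact hq.start_notMem_support_tail hxq

lemma eq_or_eq_of_mem_support_append {T : Set V} {a b z : V} {Ra : G.Walk m a}
    {Rb : G.Walk m b} {Qa : G.Walk a z} {Qb : G.Walk b z}
    (hRa : ∀ x ∈ Ra.support, x ∈ T) (hRb : ∀ x ∈ Rb.support, x ∈ T)
    (hQa : ∀ x ∈ T, x ∈ Qa.support → x = a) (hQb : ∀ x ∈ T, x ∈ Qb.support → x = b)
    (hR : ∀ x ∈ Ra.support, x ∈ Rb.support → x = m)
    (hQ : ∀ x ∈ Qa.support, x ∈ Qb.support → x = z) :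
    ∀ x ∈ (Ra.append Qa).support, x ∈ (Rb.append Qb).support → x = m ∨ x = z := by
  intro x hxa hxb
  rw [mem_support_append_iff] at hxa hxb
  rcases hxa with hxa | hxa <;> rcases hxb with hxb | hxb
  · exact Or.inl (hR x hxa hxb)
  · obtain rfl := hQb x (hRa x hxa) hxb
    exact Or.inl (hR x hxa Rb.end_mem_support)
  · obtain rfl := hQa x (hRb x hxb) hxa
    exact Or.inl (hR x Ra.end_mem_support hxb)
  · exact Or.inr (hQ x hxa hxb)

lemma eq_of_mem_support_map {H : SimpleGraph W} {f : H →g G} (hf : Function.Injective f)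
    {c a b : W} {p : H.Walk c a} {q : H.Walk c b}
    (h : ∀ y ∈ p.support, y ∈ q.support → y = c) :
    ∀ x ∈ (p.map f).support, x ∈ (q.map f).support → x = f c := by
  simp only [support_map, List.mem_map]
  rintro _ ⟨y, hy, rfl⟩ ⟨y', hy', hyy'⟩
  rw [h y hy (hf hyy' ▸ hy')]

theorem IsPath.exists_even_isCycle {A : Set V} {p q : G.Walk u v} (hp : p.IsPath)
    (hq : q.IsPath) (h : ∀ x ∈ p.support, x ∈ q.support → x = u ∨ x = v)
    (hA : ∃ a ∈ A, a ∈ p.support ∧ a ≠ u ∧ a ≠ v) (heven : Even (p.length + q.length)) :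
    ∃ (y : V) (c : G.Walk y y), c.IsCycle ∧ Even c.length ∧ (∃ a ∈ A, a ∈ c.support) ∧
      ∀ e ∈ c.edges, e ∈ p.edges ∨ e ∈ q.edges := by
  obtain ⟨a, haA, hap, hau, hav⟩ := hA
  refine ⟨u, p.append q.reverse,
    hp.isCycle_append_reverse hq h (one_lt_length_of_mem_support hap hau hav),
    by simpa using heven, ⟨a, haA, (mem_support_append_iff _ _).mpr (Or.inl hap)⟩, ?_⟩
  simp [edges_append, edges_reverse]

end Walk

theorem Connected.exists_tripod {H : SimpleGraph W} (hH : H.Connected) (x₁ x₂ x₃ : W) :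
    ∃ (m : W) (p₁ : H.Walk m x₁) (p₂ : H.Walk m x₂) (p₃ : H.Walk m x₃),
      p₁.IsPath ∧ p₂.IsPath ∧ p₃.IsPath ∧
      (∀ x ∈ p₁.support, x ∈ p₂.support → x = m) ∧
      (∀ x ∈ p₁.support, x ∈ p₃.support → x = m) ∧
      (∀ x ∈ p₂.support, x ∈ p₃.support → x = m) := by
  classical
  let p := (hH x₁ x₂).some.bypass
  let q := (hH x₃ x₁).some.bypass
  have hp : p.IsPath := Walk.bypass_isPath _
  have hq : q.IsPath := Walk.bypass_isPath _
  -- `m` is the first vertex of the `x₃`–`x₁` path lying on the `x₁`–`x₂` path.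
  obtain ⟨m, hmp, hmq, hfirst⟩ :=
    q.exists_mem_support_forall_mem_support_imp_eq p.support.toFinset ⟨x₁, by simp⟩
  rw [List.mem_toFinset] at hmp
  have hsplit : ((p.takeUntil m hmp).append (p.dropUntil m hmp)).IsPath := by
    rwa [Walk.take_spec]
  refine ⟨m, (p.takeUntil m hmp).reverse, p.dropUntil m hmp, (q.takeUntil m hmq).reverse,
    (hp.takeUntil hmp).reverse, hp.dropUntil hmp, (hq.takeUntil hmq).reverse, ?_, ?_, ?_⟩
  · simp only [Walk.support_reverse, List.mem_reverse]
    exact fun x h₁ h₂ => hsplit.eq_of_mem_support_of_append h₁ h₂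
  · simp only [Walk.support_reverse, List.mem_reverse]
    exact fun x h₁ h₃ =>
      hfirst x (List.mem_toFinset.mpr (p.support_takeUntil_subset_support hmp h₁)) h₃
  · simp only [Walk.support_reverse, List.mem_reverse]
    exact fun x h₂ h₃ =>
      hfirst x (List.mem_toFinset.mpr (p.support_dropUntil_subset_support hmp h₂)) h₃

theorem Subgraph.toSubgraph_map_hom_le (S : G.Subgraph) {a b : S.verts} (p : S.coe.Walk a b) :
    (p.map S.hom).toSubgraph ≤ S := by
  rw [Walk.toSubgraph_map]
  simpa using Subgraph.map_mono (f := S.hom) (le_top : p.toSubgraph ≤ ⊤)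

theorem Subgraph.exists_tripod {S : G.Subgraph} (hS : S.coe.Connected) {x₁ x₂ x₃ : V}
    (h₁ : x₁ ∈ S.verts) (h₂ : x₂ ∈ S.verts) (h₃ : x₃ ∈ S.verts) :
    ∃ m ∈ S.verts, ∃ (R₁ : G.Walk m x₁) (R₂ : G.Walk m x₂) (R₃ : G.Walk m x₃),
      R₁.IsPath ∧ R₂.IsPath ∧ R₃.IsPath ∧
      (∀ x ∈ R₁.support, x ∈ R₂.support → x = m) ∧
      (∀ x ∈ R₁.support, x ∈ R₃.support → x = m) ∧
      (∀ x ∈ R₂.support, x ∈ R₃.support → x = m) ∧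
      R₁.toSubgraph ≤ S ∧ R₂.toSubgraph ≤ S ∧ R₃.toSubgraph ≤ S := by
  obtain ⟨m, p₁, p₂, p₃, hp₁, hp₂, hp₃, h₁₂, h₁₃, h₂₃⟩ :=
    hS.exists_tripod ⟨x₁, h₁⟩ ⟨x₂, h₂⟩ ⟨x₃, h₃⟩
  have hinj := S.hom_injective
  exact ⟨m, m.2, p₁.map S.hom, p₂.map S.hom, p₃.map S.hom, hp₁.map hinj, hp₂.map hinj,
    hp₃.map hinj, Walk.eq_of_mem_support_map hinj h₁₂, Walk.eq_of_mem_support_map hinj h₁₃,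
    Walk.eq_of_mem_support_map hinj h₂₃,
    S.toSubgraph_map_hom_le p₁, S.toSubgraph_map_hom_le p₂, S.toSubgraph_map_hom_le p₃⟩

theorem exists_even_isCycle_of_theta {A : Set V} {u w : V} {P₁ P₂ P₃ : G.Walk u w}
    (hP₁ : P₁.IsPath) (hP₂ : P₂.IsPath) (hP₃ : P₃.IsPath)
    (h₁₂ : ∀ x ∈ P₁.support, x ∈ P₂.support → x = u ∨ x = w)
    (h₂₃ : ∀ x ∈ P₂.support, x ∈ P₃.support → x = u ∨ x = w)
    (h₃₁ : ∀ x ∈ P₃.support, x ∈ P₁.support → x = u ∨ x = w)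
    (hA₁ : ∃ a ∈ A, a ∈ P₁.support ∧ a ≠ u ∧ a ≠ w)
    (hA₂ : ∃ a ∈ A, a ∈ P₂.support ∧ a ≠ u ∧ a ≠ w) :
    ∃ (y : V) (c : G.Walk y y), c.IsCycle ∧ Even c.length ∧ (∃ a ∈ A, a ∈ c.support) ∧
      ∀ e ∈ c.edges, e ∈ P₁.edges ∨ e ∈ P₂.edges ∨ e ∈ P₃.edges := by
  have hparity : Even (P₁.length + P₂.length) ∨ Even (P₂.length + P₃.length) ∨
      Even (P₁.length + P₃.length) := by
    simp only [Nat.even_iff]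
    omega
  rcases hparity with heven | heven | heven
  · obtain ⟨y, c, hc, hlen, hcA, hE⟩ := hP₁.exists_even_isCycle hP₂ h₁₂ hA₁ heven
    exact ⟨y, c, hc, hlen, hcA, fun e he => (hE e he).imp_right Or.inl⟩
  · obtain ⟨y, c, hc, hlen, hcA, hE⟩ := hP₂.exists_even_isCycle hP₃ h₂₃ hA₂ heven
    exact ⟨y, c, hc, hlen, hcA, fun e he => Or.inr (hE e he)⟩
  · obtain ⟨y, c, hc, hlen, hcA, hE⟩ :=
      hP₁.exists_even_isCycle hP₃ (fun x h₁ h₃ => h₃₁ x h₃ h₁) hA₁ heven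
    exact ⟨y, c, hc, hlen, hcA, fun e he => (hE e he).imp_right Or.inr⟩

end SimpleGraph

open SimpleGraph

theorem tree_plus_three_paths_theta_even_A_cycle_general {V : Type*} (G : SimpleGraph V)
    (A : Set V) (z x₁ x₂ x₃ : V)
    (Q₁ : G.Walk x₁ z) (Q₂ : G.Walk x₂ z) (Q₃ : G.Walk x₃ z)
    (hQ₁ : Q₁.IsPath) (hQ₂ : Q₂.IsPath) (hQ₃ : Q₃.IsPath)
    -- the paths pairwise meet exactly in z
    (h12 : ∀ w, w ∈ Q₁.support → w ∈ Q₂.support → w = z)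
    (h13 : ∀ w, w ∈ Q₁.support → w ∈ Q₃.support → w = z)
    (h23 : ∀ w, w ∈ Q₂.support → w ∈ Q₃.support → w = z)
    -- S is a tree containing x₁, x₂, x₃, avoiding z and the interiors of the Qᵢ
    (S : G.Subgraph) (hS : S.coe.Connected ∧ S.coe.IsAcyclic)
    (hxS : x₁ ∈ S.verts ∧ x₂ ∈ S.verts ∧ x₃ ∈ S.verts) (hzS : z ∉ S.verts)
    (hS1 : ∀ w ∈ S.verts, w ∈ Q₁.support → w = x₁)
    (hS2 : ∀ w ∈ S.verts, w ∈ Q₂.support → w = x₂)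
    (hS3 : ∀ w ∈ S.verts, w ∈ Q₃.support → w = x₃)
    -- each Qᵢ contains an internal vertex of A outside S
    (hA1 : ∃ a ∈ A, a ∈ Q₁.support ∧ a ≠ x₁ ∧ a ≠ z ∧ a ∉ S.verts)
    (hA2 : ∃ a ∈ A, a ∈ Q₂.support ∧ a ≠ x₂ ∧ a ≠ z ∧ a ∉ S.verts)
    (hA3 : ∃ a ∈ A, a ∈ Q₃.support ∧ a ≠ x₃ ∧ a ≠ z ∧ a ∉ S.verts) :
    (∃ (u w : V) (_ : u ≠ w) (P₁ P₂ P₃ : G.Walk u w),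
      P₁.IsPath ∧ P₂.IsPath ∧ P₃.IsPath ∧
      (∀ x, x ∈ P₁.support → x ∈ P₂.support → x = u ∨ x = w) ∧
      (∀ x, x ∈ P₂.support → x ∈ P₃.support → x = u ∨ x = w) ∧
      (∀ x, x ∈ P₃.support → x ∈ P₁.support → x = u ∨ x = w) ∧
      (∃ a ∈ A, a ∈ P₁.support) ∧ (∃ a ∈ A, a ∈ P₂.support) ∧ (∃ a ∈ A, a ∈ P₃.support) ∧
      (∀ e : Sym2 V, (e ∈ P₁.edges ∨ e ∈ P₂.edges ∨ e ∈ P₃.edges) →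
        e ∈ S.edgeSet ∨ e ∈ Q₁.edges ∨ e ∈ Q₂.edges ∨ e ∈ Q₃.edges)) ∧
    (∃ (w : V) (c : G.Walk w w), c.IsCycle ∧ Even c.length ∧ (∃ a ∈ A, a ∈ c.support) ∧
      ∀ e ∈ c.edges, e ∈ S.edgeSet ∨ e ∈ Q₁.edges ∨ e ∈ Q₂.edges ∨ e ∈ Q₃.edges) := by
  obtain ⟨hx₁, hx₂, hx₃⟩ := hxS
  obtain ⟨m, hm, R₁, R₂, R₃, hR₁, hR₂, hR₃, hR₁₂, hR₁₃, hR₂₃, hR₁S, hR₂S, hR₃S⟩ :=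
    S.exists_tripod hS.1 hx₁ hx₂ hx₃
  have verts {a b : V} {R : G.Walk a b} (h : R.toSubgraph ≤ S) : ∀ x ∈ R.support, x ∈ S.verts :=
    fun x hx => h.1 (R.mem_verts_toSubgraph.mpr hx)
  have edges {a b : V} {R : G.Walk a b} (h : R.toSubgraph ≤ S) : ∀ e ∈ R.edges, e ∈ S.edgeSet :=
    fun e he => Subgraph.edgeSet_mono h (R.mem_edges_toSubgraph.mpr he)
  have interior {x : V} {R : G.Walk m x} {Q : G.Walk x z}
      (hA : ∃ a ∈ A, a ∈ Q.support ∧ a ≠ x ∧ a ≠ z ∧ a ∉ S.verts) :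
      ∃ a ∈ A, a ∈ (R.append Q).support ∧ a ≠ m ∧ a ≠ z :=
    let ⟨a, haA, haQ, _, haz, haS⟩ := hA
    ⟨a, haA, (Walk.mem_support_append_iff _ _).mpr (Or.inr haQ), fun h => haS (h ▸ hm), haz⟩
  have hP₁ := hR₁.append_of_forall_mem_support hQ₁ fun x hx => hS1 x (verts hR₁S x hx)
  have hP₂ := hR₂.append_of_forall_mem_support hQ₂ fun x hx => hS2 x (verts hR₂S x hx)
  have hP₃ := hR₃.append_of_forall_mem_support hQ₃ fun x hx => hS3 x (verts hR₃S x hx)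
  have hP₁₂ := Walk.eq_or_eq_of_mem_support_append (verts hR₁S) (verts hR₂S) hS1 hS2 hR₁₂ h12
  have hP₂₃ := Walk.eq_or_eq_of_mem_support_append (verts hR₂S) (verts hR₃S) hS2 hS3 hR₂₃ h23
  have hP₃₁ := Walk.eq_or_eq_of_mem_support_append (verts hR₃S) (verts hR₁S) hS3 hS1
    (fun x h₃ h₁ => hR₁₃ x h₁ h₃) (fun x h₃ h₁ => h13 x h₁ h₃)
  have hE : ∀ e : Sym2 V, (e ∈ (R₁.append Q₁).edges ∨ e ∈ (R₂.append Q₂).edges ∨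
      e ∈ (R₃.append Q₃).edges) → e ∈ S.edgeSet ∨ e ∈ Q₁.edges ∨ e ∈ Q₂.edges ∨ e ∈ Q₃.edges := by
    simp only [Walk.edges_append, List.mem_append]
    rintro e ((he | he) | (he | he) | (he | he))
    exacts [Or.inl (edges hR₁S e he), Or.inr (Or.inl he), Or.inl (edges hR₂S e he),
      Or.inr (Or.inr (Or.inl he)), Or.inl (edges hR₃S e he), Or.inr (Or.inr (Or.inr he))]
  have hI₁ := interior (R := R₁) hA1
  have hI₂ := interior (R := R₂) hA2
  have hI₃ := interior (R := R₃) hA3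
  refine ⟨⟨m, z, ne_of_mem_of_not_mem hm hzS, _, _, _, hP₁, hP₂, hP₃, hP₁₂, hP₂₃, hP₃₁,
    hI₁.imp fun _ h => ⟨h.1, h.2.1⟩, hI₂.imp fun _ h => ⟨h.1, h.2.1⟩,
    hI₃.imp fun _ h => ⟨h.1, h.2.1⟩, hE⟩, ?_⟩
  obtain ⟨y, c, hc, hlen, hcA, hcE⟩ :=
    exists_even_isCycle_of_theta hP₁ hP₂ hP₃ hP₁₂ hP₂₃ hP₃₁ hI₁ hI₂
  exact ⟨y, c, hc, hlen, hcA, fun e he => hE e (hcE e he)⟩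

/-- Three paths `Q₁, Q₂, Q₃` to a common vertex `z`, pairwise meeting only in `z`, each
containing an internal vertex of `A`, together with a tree `S` (disjoint from `z` and from
the interiors of the `Qᵢ`) connecting their starting vertices, contain a theta graph all
three of whose subdivided edges meet `A`, and hence an even `A`-cycle. -/
theorem tree_plus_three_paths_theta_even_A_cycle {V : Type*} (G : SimpleGraph V)
    (A : Set V) (z x₁ x₂ x₃ : V)
    (hx12 : x₁ ≠ x₂) (hx13 : x₁ ≠ x₃) (hx23 : x₂ ≠ x₃)
    (hxz : x₁ ≠ z ∧ x₂ ≠ z ∧ x₃ ≠ z)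
    (Q₁ : G.Walk x₁ z) (Q₂ : G.Walk x₂ z) (Q₃ : G.Walk x₃ z)
    (hQ₁ : Q₁.IsPath) (hQ₂ : Q₂.IsPath) (hQ₃ : Q₃.IsPath)
    -- the paths pairwise meet exactly in z
    (h12 : ∀ w, w ∈ Q₁.support → w ∈ Q₂.support → w = z)
    (h13 : ∀ w, w ∈ Q₁.support → w ∈ Q₃.support → w = z)
    (h23 : ∀ w, w ∈ Q₂.support → w ∈ Q₃.support → w = z)
    -- S is a tree containing x₁, x₂, x₃, avoiding z and the interiors of the Qᵢ
    (S : G.Subgraph) (hS : S.coe.Connected ∧ S.coe.IsAcyclic)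
    (hxS : x₁ ∈ S.verts ∧ x₂ ∈ S.verts ∧ x₃ ∈ S.verts) (hzS : z ∉ S.verts)
    (hS1 : ∀ w ∈ S.verts, w ∈ Q₁.support → w = x₁)
    (hS2 : ∀ w ∈ S.verts, w ∈ Q₂.support → w = x₂)
    (hS3 : ∀ w ∈ S.verts, w ∈ Q₃.support → w = x₃)
    -- each Qᵢ contains an internal vertex of A outside S
    (hA1 : ∃ a ∈ A, a ∈ Q₁.support ∧ a ≠ x₁ ∧ a ≠ z ∧ a ∉ S.verts)
    (hA2 : ∃ a ∈ A, a ∈ Q₂.support ∧ a ≠ x₂ ∧ a ≠ z ∧ a ∉ S.verts)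
    (hA3 : ∃ a ∈ A, a ∈ Q₃.support ∧ a ≠ x₃ ∧ a ≠ z ∧ a ∉ S.verts) :
    (∃ (u w : V) (_ : u ≠ w) (P₁ P₂ P₃ : G.Walk u w),
      P₁.IsPath ∧ P₂.IsPath ∧ P₃.IsPath ∧
      (∀ x, x ∈ P₁.support → x ∈ P₂.support → x = u ∨ x = w) ∧
      (∀ x, x ∈ P₂.support → x ∈ P₃.support → x = u ∨ x = w) ∧
      (∀ x, x ∈ P₃.support → x ∈ P₁.support → x = u ∨ x = w) ∧
      (∃ a ∈ A, a ∈ P₁.support) ∧ (∃ a ∈ A, a ∈ P₂.support) ∧ (∃ a ∈ A, a ∈ P₃.support) ∧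
      (∀ e : Sym2 V, (e ∈ P₁.edges ∨ e ∈ P₂.edges ∨ e ∈ P₃.edges) →
        e ∈ S.edgeSet ∨ e ∈ Q₁.edges ∨ e ∈ Q₂.edges ∨ e ∈ Q₃.edges)) ∧
    (∃ (w : V) (c : G.Walk w w), c.IsCycle ∧ Even c.length ∧ (∃ a ∈ A, a ∈ c.support) ∧
      ∀ e ∈ c.edges, e ∈ S.edgeSet ∨ e ∈ Q₁.edges ∨ e ∈ Q₂.edges ∨ e ∈ Q₃.edges) :=
  tree_plus_three_paths_theta_even_A_cycle_general G A z x₁ x₂ x₃ Q₁ Q₂ Q₃ hQ₁ hQ₂ hQ₃ h12 h13 h23 S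
    hS hxS hzS hS1 hS2 hS3 hA1 hA2 hA3
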